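/- Theorem 4.2(i), MGF part: under the stated assumptions, θ e^{-θ y} M̃₁(θ) → f̂₀(y) / Ξ̂₁(0, y) as θ → ∞; that is, M̃₁(θ) ∼ θ^{-1} e^{θ y} f̂₀(y) / Ξ̂₁(0, y), where f̂₀(y) = (2π K₀''(t_y))^{-1/2} exp(K₀(t_y) − t_y y) is the saddlepoint density approximation at y. -/

import Mathlib

/-!
Since `K₀'` is strictly increasing and `K₀'(s_{1,θ}) = y − 1/(θ − s_{1,θ}) < y = K₀'(t_y)`, the
saddlepoint `s_{1,θ}` stays below `t_y`; hence `θ − s_{1,θ} → ∞`, `K₀'(s_{1,θ}) → y`, and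
`s_{1,θ} → t_y`. Multiplying by `θ e^{−θy}` turns `Ξ̂₁(θ, y)` into
`[2π(θ⁻² + (1 − s_{1,θ}/θ)² K₀''(s_{1,θ}))]^{-1/2} exp(K₀(s_{1,θ}) − s_{1,θ} y)`,
which tends to `f̂₀(y)` by continuity of `K₀` and `K₀''` at `t_y`.
-/

open Set Filter Topology

/-- The filter on ℝ describing approach to the (possibly infinite) left endpoint
`-α` of the convergence strip from the right: `s ↓ -α`. -/
noncomputable def towardsLowerEndpoint (α : EReal) : Filter ℝ :=
  Filter.comap (fun s : ℝ => (s : EReal)) (nhdsWithin (-α) (Set.Ioi (-α)))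

/-- The filter on ℝ describing approach to the (possibly infinite) right endpoint
`β` of the convergence strip from the left: `s ↑ β`. -/
noncomputable def towardsUpperEndpoint (β : EReal) : Filter ℝ :=
  Filter.comap (fun s : ℝ => (s : EReal)) (nhdsWithin β (Set.Iio β))

/-- The saddlepoint approximation (equation (26)) to the exponential convolution
integral: `Ξ̂₁(θ, y) = [2π(1 + (θ − s)² K₀''(s))]^{-1/2} exp(K₀(s) − (s − θ)y)`,
evaluated at the saddlepoint `s = s_{1,θ}`. -/
noncomputable def XiHat (K₀ : ℝ → ℝ) (θ y s : ℝ) : ℝ :=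
  (Real.sqrt (2 * Real.pi * (1 + (θ - s) ^ 2 * deriv (deriv K₀) s)))⁻¹ *
    Real.exp (K₀ s - (s - θ) * y)

/-- The saddlepoint density approximation
`f̂₀(y) = (2π K₀''(t_y))^{-1/2} exp(K₀(t_y) − t_y y)`. -/
noncomputable def fhatSP (K₀ : ℝ → ℝ) (y t : ℝ) : ℝ :=
  (Real.sqrt (2 * Real.pi * deriv (deriv K₀) t))⁻¹ * Real.exp (K₀ t - t * y)

namespace EReal

theorem isOpen_setOf_coe_mem_Ioo (a b : EReal) :
    IsOpen {s : ℝ | a < (s : EReal) ∧ (s : EReal) < b} :=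
  isOpen_Ioo.preimage continuous_coe_real_ereal

theorem ordConnected_setOf_coe_mem_Ioo (a b : EReal) :
    OrdConnected {s : ℝ | a < (s : EReal) ∧ (s : EReal) < b} :=
  ordConnected_Ioo.preimage_mono fun _ _ h => EReal.coe_le_coe_iff.2 h

end EReal

theorem StrictMonoOn.tendsto_of_tendsto_comp {ι : Type*} {l : Filter ι} {f : ℝ → ℝ} {I : Set ℝ}
    {t : ℝ} (hf : StrictMonoOn f I) (hI : I ∈ 𝓝 t) {s : ι → ℝ} (hsI : ∀ᶠ i in l, s i ∈ I)
    (hfs : Tendsto (f ∘ s) l (𝓝 (f t))) : Tendsto s l (𝓝 t) := by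
  have htI : t ∈ I := mem_of_mem_nhds hI
  refine tendsto_order.2 ⟨fun c hc => ?_, fun c hc => ?_⟩
  · obtain ⟨c', hc'I, hcc', hc't⟩ :=
      Filter.nonempty_of_mem (inter_mem (mem_nhdsWithin_of_mem_nhds hI) (Ioo_mem_nhdsLT hc))
    filter_upwards [hsI, (tendsto_order.1 hfs).1 _ (hf hc'I htI hc't)] with i hi hfi
    exact hcc'.trans ((hf.lt_iff_lt hc'I hi).1 hfi)
  · obtain ⟨c', hc'I, htc', hc'c⟩ :=
      Filter.nonempty_of_mem (inter_mem (mem_nhdsWithin_of_mem_nhds hI) (Ioo_mem_nhdsGT hc))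
    filter_upwards [hsI, (tendsto_order.1 hfs).2 _ (hf htI hc'I htc')] with i hi hfi
    exact ((hf.lt_iff_lt hi hc'I).1 hfi).trans hc'c

theorem tendsto_of_strictMonoOn_of_add_inv_sub_eq {f : ℝ → ℝ} {I : Set ℝ} {t : ℝ}
    (hf : StrictMonoOn f I) (hI : I ∈ 𝓝 t) {s : ℝ → ℝ}
    (hs : ∀ᶠ θ in atTop, s θ ∈ I ∧ s θ < θ ∧ f (s θ) + (θ - s θ)⁻¹ = f t) :
    Tendsto s atTop (𝓝 t) := by
  have hs_lt : ∀ᶠ θ in atTop, s θ < t := by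
    filter_upwards [hs] with θ ⟨hsI, hsθ, heq⟩
    have : 0 < (θ - s θ)⁻¹ := inv_pos.2 (sub_pos.2 hsθ)
    exact (hf.lt_iff_lt hsI (mem_of_mem_nhds hI)).1 (by linarith)
  have hgap : Tendsto (fun θ => θ - s θ) atTop atTop :=
    tendsto_atTop_mono' atTop (hs_lt.mono fun θ h => by dsimp only [id]; linarith)
      (tendsto_atTop_add_const_right atTop (-t) tendsto_id)
  refine hf.tendsto_of_tendsto_comp hI (hs.mono fun _ h => h.1) ?_
  have hlim := tendsto_const_nhds (x := f t) |>.sub (tendsto_inv_atTop_zero.comp hgap)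
  rw [sub_zero] at hlim
  refine hlim.congr' ?_
  filter_upwards [hs] with θ ⟨_, _, heq⟩
  simp only [Function.comp_apply]
  linarith

theorem mul_exp_mul_XiHat_eq (K : ℝ → ℝ) {θ : ℝ} (hθ : 0 < θ) (y s : ℝ) :
    θ * Real.exp (-θ * y) * XiHat K θ y s =
      (Real.sqrt (2 * Real.pi * ((θ⁻¹) ^ 2 + (1 - s / θ) ^ 2 * deriv (deriv K) s)))⁻¹ *
        Real.exp (K s - s * y) := by
  have hvar : 2 * Real.pi * ((θ⁻¹) ^ 2 + (1 - s / θ) ^ 2 * deriv (deriv K) s) =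
      2 * Real.pi * (1 + (θ - s) ^ 2 * deriv (deriv K) s) / θ ^ 2 := by
    field_simp
  have hexp : Real.exp (-θ * y) * Real.exp (K s - (s - θ) * y) = Real.exp (K s - s * y) := by
    rw [← Real.exp_add]
    ring_nf
  rw [hvar, Real.sqrt_div' _ (sq_nonneg θ), Real.sqrt_sq hθ.le, inv_div, ← hexp, XiHat]
  ring

theorem tendsto_mul_exp_mul_XiHat {K : ℝ → ℝ} {y t : ℝ} {s : ℝ → ℝ}
    (hs : Tendsto s atTop (𝓝 t)) (hK : ContinuousAt K t)
    (hK'' : ContinuousAt (deriv (deriv K)) t) (hpos : 0 < deriv (deriv K) t) :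
    Tendsto (fun θ => θ * Real.exp (-θ * y) * XiHat K θ y (s θ)) atTop (𝓝 (fhatSP K y t)) := by
  have hratio : Tendsto (fun θ => 1 - s θ / θ) atTop (𝓝 1) := by
    simpa using tendsto_const_nhds.sub (hs.div_atTop tendsto_id)
  have hvar : Tendsto (fun θ => 2 * Real.pi * ((θ⁻¹) ^ 2 + (1 - s θ / θ) ^ 2 *
      deriv (deriv K) (s θ))) atTop (𝓝 (2 * Real.pi * deriv (deriv K) t)) := by
    simpa using ((tendsto_inv_atTop_zero.pow 2).add
      ((hratio.pow 2).mul (hK''.tendsto.comp hs))).const_mul (2 * Real.pi)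
  have hsqrt_ne : Real.sqrt (2 * Real.pi * deriv (deriv K) t) ≠ 0 := by positivity
  refine ((hvar.sqrt.inv₀ hsqrt_ne).mul
    ((hK.tendsto.comp hs).sub (hs.mul_const y)).rexp).congr' ?_
  filter_upwards [eventually_gt_atTop 0] with θ hθ
  exact (mul_exp_mul_XiHat_eq K hθ y (s θ)).symm

theorem exp_convolution_mgf_right_tail_general
    (K₀ : ℝ → ℝ) (α β : EReal)
    (hsmooth : ContDiffOn ℝ 2 K₀ {s : ℝ | -α < (s : EReal) ∧ (s : EReal) < β})
    (hconv : ∀ s : ℝ, -α < (s : EReal) → (s : EReal) < β → 0 < deriv (deriv K₀) s)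
    (y t_y : ℝ) (hty₁ : -α < (t_y : EReal)) (hty₂ : (t_y : EReal) < β)
    (hty : deriv K₀ t_y = y)
    (s₁ : ℝ → ℝ)
    (hs₁ : ∀ θ : ℝ, -α < (θ : EReal) →
      (-α < (s₁ θ : EReal) ∧ (s₁ θ : EReal) < β ∧ s₁ θ < θ) ∧
        deriv K₀ (s₁ θ) + (θ - s₁ θ)⁻¹ = y) :
    Tendsto (fun θ : ℝ => θ * Real.exp (-θ * y) * (XiHat K₀ θ y (s₁ θ) / XiHat K₀ 0 y (s₁ 0)))
      atTop (nhds (fhatSP K₀ y t_y / XiHat K₀ 0 y (s₁ 0))) := by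
  subst hty
  set I := {s : ℝ | -α < (s : EReal) ∧ (s : EReal) < β}
  have hIopen : IsOpen I := EReal.isOpen_setOf_coe_mem_Ioo _ _
  have htI : I ∈ 𝓝 t_y := hIopen.mem_nhds ⟨hty₁, hty₂⟩
  have hK' : ContDiffOn ℝ 1 (deriv K₀) I := hsmooth.deriv_of_isOpen hIopen (by norm_num)
  have hmono : StrictMonoOn (deriv K₀) I := by
    refine strictMonoOn_of_deriv_pos (EReal.ordConnected_setOf_coe_mem_Ioo _ _).convex
      hK'.continuousOn ?_
    rw [hIopen.interior_eq]
    exact fun s hs => hconv s hs.1 hs.2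
  have hs₁_lim : Tendsto s₁ atTop (𝓝 t_y) := by
    refine tendsto_of_strictMonoOn_of_add_inv_sub_eq hmono htI ?_
    filter_upwards [eventually_gt_atTop t_y] with θ hθ
    obtain ⟨⟨hlow, hup, hlt⟩, heq⟩ := hs₁ θ (hty₁.trans (EReal.coe_lt_coe_iff.2 hθ))
    exact ⟨⟨hlow, hup⟩, hlt, heq⟩
  have hlim := (tendsto_mul_exp_mul_XiHat (y := deriv K₀ t_y) hs₁_lim
    (hsmooth.continuousOn.continuousAt htI)
    ((hK'.continuousOn_deriv_of_isOpen hIopen le_rfl).continuousAt htI)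
    (hconv t_y hty₁ hty₂)).div_const (XiHat K₀ 0 (deriv K₀ t_y) (s₁ 0))
  simpa only [mul_div_assoc] using hlim

/-- **Theorem 4.2(i), MGF part**: with `K₀` twice continuously differentiable,
`K₀'' > 0` and steep on `(-α, β)`, `t_y` the saddlepoint for `y` and `s_{1,θ}`
the exponential-convolution saddlepoint, the approximation
`M̃₁(θ) = Ξ̂₁(θ, y)/Ξ̂₁(0, y)` satisfies
`θ e^{-θy} M̃₁(θ) → f̂₀(y)/Ξ̂₁(0, y)` as `θ → ∞`, i.e.
`M̃₁(θ) ∼ θ⁻¹ e^{θy} f̂₀(y)/Ξ̂₁(0, y)`. -/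
theorem exp_convolution_mgf_right_tail
    (K₀ : ℝ → ℝ) (α β : EReal) (hα : 0 < α) (hβ : 0 < β)
    (hsmooth : ContDiffOn ℝ 2 K₀ {s : ℝ | -α < (s : EReal) ∧ (s : EReal) < β})
    (hconv : ∀ s : ℝ, -α < (s : EReal) → (s : EReal) < β → 0 < deriv (deriv K₀) s)
    (hbot : Tendsto (deriv K₀) (towardsLowerEndpoint α) atBot)
    (htop : Tendsto (deriv K₀) (towardsUpperEndpoint β) atTop)
    (y t_y : ℝ) (hty₁ : -α < (t_y : EReal)) (hty₂ : (t_y : EReal) < β)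
    (hty : deriv K₀ t_y = y)
    (s₁ : ℝ → ℝ)
    (hs₁ : ∀ θ : ℝ, -α < (θ : EReal) →
      (-α < (s₁ θ : EReal) ∧ (s₁ θ : EReal) < β ∧ s₁ θ < θ) ∧
        deriv K₀ (s₁ θ) + (θ - s₁ θ)⁻¹ = y) :
    Tendsto (fun θ : ℝ => θ * Real.exp (-θ * y) * (XiHat K₀ θ y (s₁ θ) / XiHat K₀ 0 y (s₁ 0)))
      atTop (nhds (fhatSP K₀ y t_y / XiHat K₀ 0 y (s₁ 0))) :=
  exp_convolution_mgf_right_tail_general K₀ α β hsmooth hconv y t_y hty₁ hty₂ hty s₁ hs₁
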